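/- Assume M is invertible and suppose λ₀, μ₀ ∈ ℂ and u, u' ∈ ℂⁿ satisfy (Q(λ₀) + μ₀ I)u = 0 and Q'(λ₀)u + (Q(λ₀) + μ₀ I)u' = 0. Then the vector [u⊗u; u⊗u'] ∈ ℂ^{2n²} lies in the null space of the block matrix A(λ₀) = [[I⊗Q(λ₀) − Q(λ₀)⊗I, 0],[I⊗Q'(λ₀), I⊗Q(λ₀) − Q(λ₀)⊗I]]. -/
import Mathlib


open Matrix
open scoped Kronecker

namespace ZGV4

variable {n : ℕ}

/-- Kronecker product of two vectors: `(u ⊗ v)_{(i,j)} = u_i v_j`. -/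
def vecKron {m p : Type*} (u : m → ℂ) (v : p → ℂ) : m × p → ℂ :=
  fun x => u x.1 * v x.2

/-- `Q(λ) = M⁻¹(L₀ + λL₁ + λ²L₂)`. -/
noncomputable def Q (L2 L1 L0 M : Matrix (Fin n) (Fin n) ℂ) (lam : ℂ) :
    Matrix (Fin n) (Fin n) ℂ :=
  M⁻¹ * (L0 + lam • L1 + lam ^ 2 • L2)

/-- `Q'(λ) = M⁻¹(L₁ + 2λL₂)`. -/
noncomputable def Q' (L2 L1 M : Matrix (Fin n) (Fin n) ℂ) (lam : ℂ) :
    Matrix (Fin n) (Fin n) ℂ :=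
  M⁻¹ * (L1 + (2 * lam) • L2)

/-- `A(λ) = [[I⊗Q(λ) − Q(λ)⊗I, 0],[I⊗Q'(λ), I⊗Q(λ) − Q(λ)⊗I]]`. -/
noncomputable def A (L2 L1 L0 M : Matrix (Fin n) (Fin n) ℂ) (lam : ℂ) :
    Matrix ((Fin n × Fin n) ⊕ (Fin n × Fin n)) ((Fin n × Fin n) ⊕ (Fin n × Fin n)) ℂ :=
  Matrix.fromBlocks
    ((1 : Matrix (Fin n) (Fin n) ℂ) ⊗ₖ Q L2 L1 L0 M lam
        - Q L2 L1 L0 M lam ⊗ₖ (1 : Matrix (Fin n) (Fin n) ℂ))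
    0
    ((1 : Matrix (Fin n) (Fin n) ℂ) ⊗ₖ Q' L2 L1 M lam)
    ((1 : Matrix (Fin n) (Fin n) ℂ) ⊗ₖ Q L2 L1 L0 M lam
        - Q L2 L1 L0 M lam ⊗ₖ (1 : Matrix (Fin n) (Fin n) ℂ))

lemma kron_mulVec {n : ℕ} (A B : Matrix (Fin n) (Fin n) ℂ) (u v : Fin n → ℂ) :
    (A ⊗ₖ B) *ᵥ vecKron u v = vecKron (A *ᵥ u) (B *ᵥ v) := by
  funext ⟨i, j⟩
  simp only [Matrix.mulVec, vecKron, dotProduct, Matrix.kroneckerMap_apply,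
    Fintype.sum_prod_type]
  rw [Finset.sum_mul_sum]
  refine Finset.sum_congr rfl fun k _ => Finset.sum_congr rfl fun l _ => by ring

lemma vecKron_add_right {n : ℕ} (u v w : Fin n → ℂ) :
    vecKron u (v + w) = vecKron u v + vecKron u w := by
  funext ⟨i, j⟩; simp [vecKron]; ring

lemma vecKron_smul_right {n : ℕ} (c : ℂ) (u v : Fin n → ℂ) :
    vecKron u (c • v) = c • vecKron u v := by
  funext ⟨i, j⟩; simp [vecKron]; ring

lemma vecKron_smul_left {n : ℕ} (c : ℂ) (u v : Fin n → ℂ) :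
    vecKron (c • u) v = c • vecKron u v := by
  funext ⟨i, j⟩; simp [vecKron]; ring

/-- If `(Q(λ₀) + μ₀I)u = 0` and `Q'(λ₀)u + (Q(λ₀) + μ₀I)u' = 0`, then the stacked
vector `[u⊗u; u⊗u']` lies in the null space of `A(λ₀)`. -/
theorem stacked_kron_in_kernel_of_A
    (n : ℕ) (hn : 1 ≤ n) (L2 L1 L0 M : Matrix (Fin n) (Fin n) ℂ)
    (hM : IsUnit M) (lam0 mu0 : ℂ) (u u' : Fin n → ℂ)
    (h1 : (Q L2 L1 L0 M lam0 + mu0 • (1 : Matrix (Fin n) (Fin n) ℂ)) *ᵥ u = 0)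
    (h2 : Q' L2 L1 M lam0 *ᵥ u
            + (Q L2 L1 L0 M lam0 + mu0 • (1 : Matrix (Fin n) (Fin n) ℂ)) *ᵥ u' = 0) :
    A L2 L1 L0 M lam0 *ᵥ Sum.elim (vecKron u u) (vecKron u u') = 0 := by
  have hQu : Q L2 L1 L0 M lam0 *ᵥ u = -(mu0 • u) := by
    have := h1
    rw [Matrix.add_mulVec, Matrix.smul_mulVec, Matrix.one_mulVec] at this
    linear_combination (norm := module) this
  have hQu' : Q L2 L1 L0 M lam0 *ᵥ u' = -(Q' L2 L1 M lam0 *ᵥ u) - mu0 • u' := by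
    have := h2
    rw [Matrix.add_mulVec, Matrix.smul_mulVec, Matrix.one_mulVec] at this
    linear_combination (norm := module) this
  rw [A, Matrix.fromBlocks_mulVec]
  simp only [Sum.elim_comp_inl, Sum.elim_comp_inr]
  rw [Matrix.sub_mulVec, Matrix.sub_mulVec, Matrix.zero_mulVec,
    kron_mulVec, kron_mulVec, kron_mulVec, kron_mulVec, kron_mulVec]
  simp only [Matrix.one_mulVec]
  rw [hQu, hQu']
  have e1 : vecKron u (-(mu0 • u)) - vecKron (-(mu0 • u)) u = 0 := by
    rw [show -(mu0 • u) = (-mu0) • u by module, vecKron_smul_right, vecKron_smul_left]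
    abel
  have e2 : vecKron u (Q' L2 L1 M lam0 *ᵥ u)
      + (vecKron u (-(Q' L2 L1 M lam0 *ᵥ u) - mu0 • u') - vecKron (-(mu0 • u)) u') = 0 := by
    rw [show -(Q' L2 L1 M lam0 *ᵥ u) - mu0 • u'
        = -(Q' L2 L1 M lam0 *ᵥ u) + (-mu0) • u' by module,
      vecKron_add_right, show -(Q' L2 L1 M lam0 *ᵥ u) = (-1 : ℂ) • (Q' L2 L1 M lam0 *ᵥ u) by module,
      vecKron_smul_right, vecKron_smul_right,
      show -(mu0 • u) = (-mu0) • u by module, vecKron_smul_left]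
    module
  rw [e1, add_zero, e2]
  ext (x | x) <;> simp

end ZGV4
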